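/- arXiv:1902.03056 — 3 statements merged into one kernel-verified Lean document; each statement's English description precedes it below -/
import Mathlib

section
/- Every Einstein-symmetric tensor 𝒜 ∈ S_{2m,d} admits an eigenvalue decomposition 𝒜 = 𝒰 *_E 𝒟 *_E 𝒰^T with 𝒰 Einstein-orthogonal and 𝒟 diagonal Einstein-symmetric. -/
/-- A tensor in `T_{2m,d}`, with its `2m` indices split into two blocks of `m`. -/
abbrev Tensor2 (m d : ℕ) := (Fin m → Fin d) → (Fin m → Fin d) → ℝ

/-- The Einstein product on `T_{2m,d}`. -/
def eMul {m d : ℕ} (A B : Tensor2 m d) : Tensor2 m d :=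
  fun i j => ∑ k : Fin m → Fin d, A i k * B k j

/-- The tensor transpose: swap the two blocks of `m` indices. -/
def eT {m d : ℕ} (A : Tensor2 m d) : Tensor2 m d := fun i j => A j i

/-- The Einstein identity tensor. -/
def eId (m d : ℕ) : Tensor2 m d := fun i j => if i = j then 1 else 0

/-- The matricization `f : T_{2m,d} → ℝ^{d^m × d^m}` via the base-`d`
index encoding `i = i₁ + Σ_{k=2}^m (i_k - 1) d^{k-1}` (0-based here). -/
def matricize {m d : ℕ} (A : Tensor2 m d) : Matrix (Fin (d ^ m)) (Fin (d ^ m)) ℝ :=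
  fun p q => A (finFunctionFinEquiv.symm p) (finFunctionFinEquiv.symm q)

/-! The Einstein product, transpose and identity are the matrix product, transpose and identity
for matrices indexed by `Fin m → Fin d`, so the real spectral theorem applies to `𝒜` directly,
without passing through the matricization. -/

open Matrix

theorem Matrix.IsSymm.exists_orthogonal_diagonalization {ι : Type*} [Fintype ι] [DecidableEq ι]
    {A : Matrix ι ι ℝ} (hA : A.IsSymm) :
    ∃ (U : Matrix ι ι ℝ) (w : ι → ℝ), Uᵀ * U = 1 ∧ A = U * diagonal w * Uᵀ := by
  have hH : A.IsHermitian := hA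
  exact ⟨hH.eigenvectorUnitary, hH.eigenvalues,
    mem_unitaryGroup_iff'.mp hH.eigenvectorUnitary.2, hH.spectral_theorem⟩

section MatrixForm

variable {m d : ℕ}

lemma mul_eq_eMul (A B : Matrix (Fin m → Fin d) (Fin m → Fin d) ℝ) : A * B = eMul A B := by
  ext i j
  simp [eMul, mul_apply]

lemma one_eq_eId : (1 : Matrix (Fin m → Fin d) (Fin m → Fin d) ℝ) = eId m d := by
  ext i j
  simp [eId, one_apply]

end MatrixForm

/-- Every Einstein-symmetric tensor admits an eigenvalue decomposition
`𝒜 = 𝒰 *_E 𝒟 *_E 𝒰ᵀ` with `𝒰` Einstein-orthogonal and `𝒟` diagonal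
Einstein-symmetric. -/
theorem einstein_evd {m d : ℕ} (A : Tensor2 m d) (hA : eT A = A) :
    ∃ U D : Tensor2 m d,
      eMul (eT U) U = eId m d ∧
      (∀ i j : Fin m → Fin d, i ≠ j → D i j = 0) ∧
      eT D = D ∧
      A = eMul (eMul U D) (eT U) := by
  obtain ⟨U, w, hU, hAUw⟩ := (show (of A).IsSymm from hA).exists_orthogonal_diagonalization
  refine ⟨U, diagonal w, ?_, fun i j hij => diagonal_apply_ne w hij, diagonal_transpose w, ?_⟩
  · exact (mul_eq_eMul Uᵀ U).symm.trans (hU.trans one_eq_eId)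
  · exact hAUw.trans ((mul_eq_eMul _ _).trans (congrArg (eMul · (eT U)) (mul_eq_eMul U _)))
end

section
/- For an Einstein-symmetric real tensor 𝒜 ∈ T_{2m,d}, if Z-eigenvalues of 𝒜 exist, then the maximum Einstein-eigenvalue of 𝒜 (i.e., the maximum eigenvalue of the symmetric matrix f(𝒜)) is at least the maximum Z-eigenvalue: λ^E_max(𝒜) ≥ λ^Z_max(𝒜). -/
/-!
If `x` is a unit Z-eigenvector of `𝒜` with eigenvalue `λ`, contracting the eigen-equation once
more with `x` gives `𝒜x^{2m} = λ`. Splitting the `2m` indices into two halves of `m` shows that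
`𝒜x^{2m}` is the quadratic form of the matricization `f(𝒜)` at the unit vector `x^{⊗m}`, and a
symmetric matrix's quadratic form on unit vectors is bounded by its largest eigenvalue.
-/

/-- Matricization of an order-`2m` tensor: the first `m` indices encode the
row, the last `m` indices the column, in base `d`. -/
def matricizeFull {m d : ℕ} (A : (Fin (2 * m) → Fin d) → ℝ) :
    Matrix (Fin (d ^ m)) (Fin (d ^ m)) ℝ :=
  fun p q => A (fun k =>
    Fin.append (finFunctionFinEquiv.symm p) (finFunctionFinEquiv.symm q)
      (Fin.cast (two_mul m) k))

open Matrix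

open MatrixOrder in
theorem Matrix.IsHermitian.dotProduct_mulVec_le_of_forall_eigenvalues_le {n : Type*}
    [Fintype n] [DecidableEq n] {M : Matrix n n ℝ} (hM : M.IsHermitian) {r : ℝ}
    (hr : ∀ i, hM.eigenvalues i ≤ r) (y : n → ℝ) : y ⬝ᵥ M *ᵥ y ≤ r * (y ⬝ᵥ y) := by
  have hle : M ≤ algebraMap ℝ (Matrix n n ℝ) r := by
    rw [le_algebraMap_iff_spectrum_le hM.isSelfAdjoint, hM.spectrum_real_eq_range_eigenvalues]
    rintro _ ⟨i, rfl⟩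
    exact hr i
  have := (Matrix.le_iff.mp hle).dotProduct_mulVec_nonneg y
  rwa [Algebra.algebraMap_eq_smul_one, sub_mulVec, smul_mulVec, one_mulVec, dotProduct_sub,
    dotProduct_smul, star_trivial, smul_eq_mul, sub_nonneg] at this

section Contraction

variable {ι : Type*} [Fintype ι]

/-- The full contraction `𝒜xⁿ = ∑ 𝒜_{i₁…iₙ} x_{i₁}⋯x_{iₙ}`. -/
def contractPow {n : ℕ} (A : (Fin n → ι) → ℝ) (x : ι → ℝ) : ℝ :=
  ∑ f, A f * ∏ k, x (f k)

theorem contractPow_comp_cast {n n' : ℕ} (h : n = n') (A : (Fin n → ι) → ℝ) (x : ι → ℝ) :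
    contractPow (fun g : Fin n' → ι => A (fun k => g (Fin.cast h k))) x =
      contractPow A x := by
  subst h
  rfl

theorem contractPow_succ {n : ℕ} (A : (Fin (n + 1) → ι) → ℝ) (x : ι → ℝ) :
    contractPow A x = ∑ j, x j * ∑ i : Fin n → ι, A (Fin.cons j i) * ∏ t, x (i t) := by
  rw [contractPow, ← (Fin.consEquiv fun _ => ι).sum_comp, Fintype.sum_prod_type]
  simp only [Fin.consEquiv, Equiv.coe_fn_mk, Fin.prod_univ_succ, Fin.cons_zero, Fin.cons_succ,
    Finset.mul_sum]
  exact Finset.sum_congr rfl fun _ _ => Finset.sum_congr rfl fun _ _ => by ring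

theorem contractPow_add {a b : ℕ} (A : (Fin (a + b) → ι) → ℝ) (x : ι → ℝ) :
    contractPow A x =
      ∑ i : Fin a → ι, ∑ j : Fin b → ι, (∏ t, x (i t)) * A (Fin.append i j) * ∏ t, x (j t) := by
  rw [contractPow, ← (Fin.appendEquiv a b).sum_comp, Fintype.sum_prod_type]
  simp only [Fin.appendEquiv, Equiv.coe_fn_mk, Fin.prod_univ_add, Fin.append_left,
    Fin.append_right]
  exact Finset.sum_congr rfl fun _ _ => Finset.sum_congr rfl fun _ _ => by ring

theorem contractPow_eq_mul_sum_sq {n k : ℕ} (h : n = k + 1) {A : (Fin n → ι) → ℝ}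
    {x : ι → ℝ} {lam : ℝ}
    (heig : ∀ j, ∑ i : Fin k → ι,
      A (fun t => (Fin.cons j i : Fin (k + 1) → ι) (Fin.cast h t)) * ∏ t, x (i t) = lam * x j) :
    contractPow A x = lam * ∑ j, x j ^ 2 := by
  rw [← contractPow_comp_cast h, contractPow_succ, Finset.mul_sum]
  refine Finset.sum_congr rfl fun j _ => ?_
  rw [heig j]
  ring

end Contraction

/-- `x^{⊗m}`, flattened in the base-`d` encoding used by `matricizeFull`. -/
def kronPow {d : ℕ} (x : Fin d → ℝ) (m : ℕ) : Fin (d ^ m) → ℝ :=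
  fun p => ∏ t, x (finFunctionFinEquiv.symm p t)

theorem kronPow_dotProduct_self {d : ℕ} (x : Fin d → ℝ) (m : ℕ) :
    kronPow x m ⬝ᵥ kronPow x m = (∑ i, x i ^ 2) ^ m := by
  rw [Fintype.sum_pow, dotProduct, ← finFunctionFinEquiv.sum_comp]
  simp only [kronPow, Equiv.symm_apply_apply, ← Finset.prod_mul_distrib, sq]

theorem kronPow_dotProduct_matricizeFull_mulVec {m d : ℕ} (A : (Fin (2 * m) → Fin d) → ℝ)
    (x : Fin d → ℝ) :
    kronPow x m ⬝ᵥ matricizeFull A *ᵥ kronPow x m = contractPow A x := by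
  rw [← contractPow_comp_cast (two_mul m), contractPow_add, dotProduct,
    ← finFunctionFinEquiv.sum_comp]
  refine Finset.sum_congr rfl fun i _ => ?_
  rw [mulVec, dotProduct, ← finFunctionFinEquiv.sum_comp, Finset.mul_sum]
  refine Finset.sum_congr rfl fun j _ => ?_
  simp only [kronPow, matricizeFull, Equiv.symm_apply_apply]
  ring

/-- For an Einstein-symmetric tensor `𝒜 ∈ T_{2m,d}`, every Z-eigenvalue of
`𝒜` is at most some eigenvalue of the symmetric matrix `f(𝒜)`; i.e.
`λ^E_max(𝒜) ≥ λ^Z_max(𝒜)`. -/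
theorem eEig_max_ge_zEig_max {m d : ℕ} (hm : 1 ≤ m)
    (A : (Fin (2 * m) → Fin d) → ℝ)
    (hH : (matricizeFull A).IsHermitian)
    (lam : ℝ) (x : Fin d → ℝ)
    (hx : ∑ i, x i ^ 2 = 1)
    (heig : ∀ j : Fin d,
      ∑ i : Fin (2 * m - 1) → Fin d,
          A (fun k => (Fin.cons j i : Fin (2 * m - 1 + 1) → Fin d) (Fin.cast (by omega : 2 * m = 2 * m - 1 + 1) k)) *
            ∏ t, x (i t) = lam * x j) :
    ∃ k, lam ≤ hH.eigenvalues k := by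
  have hd : 0 < d := Nat.pos_of_ne_zero (by rintro rfl; simp at hx)
  have : Nonempty (Fin (d ^ m)) := Fin.pos_iff_nonempty.mp (pow_pos hd m)
  obtain ⟨k, hk⟩ := Finite.exists_max hH.eigenvalues
  refine ⟨k, ?_⟩
  have hquad := hH.dotProduct_mulVec_le_of_forall_eigenvalues_le hk (kronPow x m)
  rwa [kronPow_dotProduct_matricizeFull_mulVec, contractPow_eq_mul_sum_sq (by omega) heig,
    kronPow_dotProduct_self, hx, one_pow, mul_one, mul_one] at hquad
end

section
/- There exists a tensor PSD but not Einstein-PSD: the tensor 𝒜 ∈ T_{4,3} with entries a_{1122}=a_{1212}=a_{1221}=a_{2112}=a_{2121}=a_{2211}=1 and all other entries 0 satisfies 𝒜x⁴ = 6x₁²x₂² ≥ 0 for all x ∈ ℝ³, yet its matricization f(𝒜) ∈ ℝ^{9×9} is not positive semidefinite (for y = e₁ − e₅ one has y^T f(𝒜) y = −2 < 0). -/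
open Matrix

/-- Matricization of an order-4, dimension-3 tensor into a `9 × 9` matrix
via the base-3 index encoding on each pair of indices. -/
def matricize4 (A : (Fin 2 → Fin 3) → (Fin 2 → Fin 3) → ℝ) :
    Matrix (Fin (3 ^ 2)) (Fin (3 ^ 2)) ℝ :=
  fun p q => A (finFunctionFinEquiv.symm p) (finFunctionFinEquiv.symm q)

/-- The tensor of Example 4.5: `a_{1122} = a_{1212} = a_{1221} = a_{2112}
= a_{2121} = a_{2211} = 1` (1-based), all other entries 0, written with its
four indices split into two pairs. -/
def exTensor : (Fin 2 → Fin 3) → (Fin 2 → Fin 3) → ℝ :=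
  fun i j =>
    if (i 0 = 0 ∧ i 1 = 0 ∧ j 0 = 1 ∧ j 1 = 1) ∨
       (i 0 = 0 ∧ i 1 = 1 ∧ j 0 = 0 ∧ j 1 = 1) ∨
       (i 0 = 0 ∧ i 1 = 1 ∧ j 0 = 1 ∧ j 1 = 0) ∨
       (i 0 = 1 ∧ i 1 = 0 ∧ j 0 = 0 ∧ j 1 = 1) ∨
       (i 0 = 1 ∧ i 1 = 0 ∧ j 0 = 1 ∧ j 1 = 0) ∨
       (i 0 = 1 ∧ i 1 = 1 ∧ j 0 = 0 ∧ j 1 = 0) then 1 else 0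

/-!
The six nonzero entries of `𝒜` are the arrangements of the index multiset `{1, 1, 2, 2}`, so
`𝒜x⁴ = 6 x₁² x₂²`. In `f(𝒜)` the rows and columns `11` and `22` (positions `0` and `4`) meet in
the principal submatrix `[[0, 1], [1, 0]]`, which is indefinite.
-/

theorem Fintype.sum_fin_two_fun {α M : Type*} [Fintype α] [AddCommMonoid M]
    (f : (Fin 2 → α) → M) : ∑ i, f i = ∑ a, ∑ b, f ![a, b] := by
  rw [← (piFinTwoEquiv fun _ => α).symm.sum_comp, Fintype.sum_prod_type]
  rfl

namespace Matrix

theorem sum_mul_mul_single_sub_single {n R : Type*} [Fintype n] [DecidableEq n] [CommRing R]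
    (M : Matrix n n R) (a b : n) :
    ∑ p, ∑ q, (Pi.single a 1 - Pi.single b 1 : n → R) p * M p q *
        (Pi.single a 1 - Pi.single b 1 : n → R) q = M a a - M a b - M b a + M b b := by
  simp [sub_mul, mul_sub, Finset.sum_sub_distrib, Pi.single_apply]
  ring

theorem not_posSemidef_of_sum_mul_mul_neg {n R : Type*} [Fintype n] [CommRing R]
    [PartialOrder R] [StarRing R] [TrivialStar R] {M : Matrix n n R} {y : n → R}
    (hy : ∑ p, ∑ q, y p * M p q * y q < 0) : ¬ M.PosSemidef := fun hM => by
  have hnonneg := hM.dotProduct_mulVec_nonneg y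
  simp only [dotProduct, mulVec, star_trivial, Finset.mul_sum, ← mul_assoc] at hnonneg
  exact hnonneg.not_gt hy

end Matrix

theorem exTensor_form_eq (x : Fin 3 → ℝ) :
    ∑ i : Fin 2 → Fin 3, ∑ j : Fin 2 → Fin 3,
        exTensor i j * (∏ t, x (i t)) * ∏ t, x (j t)
      = 6 * (x 0) ^ 2 * (x 1) ^ 2 := by
  simp only [Fintype.sum_fin_two_fun, Fin.sum_univ_three, Fin.prod_univ_two, exTensor,
    cons_val_zero, cons_val_one]
  norm_num [Fin.ext_iff]
  ring

theorem matricize4_exTensor_form_single_sub_single :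
    ∑ p, ∑ q, (Pi.single 0 1 - Pi.single 4 1 : Fin (3 ^ 2) → ℝ) p * matricize4 exTensor p q *
        (Pi.single 0 1 - Pi.single 4 1 : Fin (3 ^ 2) → ℝ) q = -2 := by
  have h0 : (finFunctionFinEquiv.symm 0 : Fin 2 → Fin 3) = ![0, 0] := by decide
  have h4 : (finFunctionFinEquiv.symm 4 : Fin 2 → Fin 3) = ![1, 1] := by decide
  rw [sum_mul_mul_single_sub_single]
  norm_num [matricize4, exTensor, h0, h4]

/-- A tensor that is PSD but not Einstein-PSD: `𝒜 x⁴ = 6 x₁² x₂² ≥ 0` for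
all `x ∈ ℝ³`, yet `f(𝒜)` is not a positive semidefinite matrix (the vector
`y = e₁ - e₅` gives `yᵀ f(𝒜) y = -2 < 0`). -/
theorem psd_not_einstein_psd :
    (∀ x : Fin 3 → ℝ,
        ∑ i : Fin 2 → Fin 3, ∑ j : Fin 2 → Fin 3,
            exTensor i j * (∏ t, x (i t)) * ∏ t, x (j t)
          = 6 * (x 0) ^ 2 * (x 1) ^ 2) ∧
    (∀ x : Fin 3 → ℝ,
        0 ≤ ∑ i : Fin 2 → Fin 3, ∑ j : Fin 2 → Fin 3,
              exTensor i j * (∏ t, x (i t)) * ∏ t, x (j t)) ∧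
    (∑ p : Fin (3 ^ 2), ∑ q : Fin (3 ^ 2),
        (fun r : Fin (3 ^ 2) => if r = 0 then (1 : ℝ) else if r = 4 then -1 else 0) p *
          matricize4 exTensor p q *
          (fun r : Fin (3 ^ 2) => if r = 0 then (1 : ℝ) else if r = 4 then -1 else 0) q
      = -2) ∧
    ¬ (matricize4 exTensor).PosSemidef := by
  have hy : (fun r : Fin (3 ^ 2) => if r = 0 then (1 : ℝ) else if r = 4 then -1 else 0)
      = Pi.single 0 1 - Pi.single 4 1 := by
    ext r
    fin_cases r <;> simp
  have hform := matricize4_exTensor_form_single_sub_single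
  rw [← hy] at hform
  refine ⟨exTensor_form_eq, fun x => ?_, hform,
    not_posSemidef_of_sum_mul_mul_neg (hform.trans_lt (by norm_num))⟩
  rw [exTensor_form_eq]
  positivity
end
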